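/- arXiv:2102.07773 — 2 statements merged into one kernel-verified Lean document; each statement's English description precedes it below -/
import Mathlib

section
/- For any Hermiticity-preserving map Φ, writing J_Φ = (J_Φ)₊ − (J_Φ)₋ for the Jordan decomposition of the Choi matrix into positive and negative parts, the base norm with respect to CPTNI maps satisfies (1/d_A)‖J_Φ‖₁ ≤ ‖Φ‖_CPTNI ≤ ‖J_Φ‖₁. -/
open Matrix Kronecker ComplexOrder

/-- Singular values of a square complex matrix. -/
noncomputable def singVals {n : Type*} [Fintype n] [DecidableEq n]
    (X : Matrix n n ℂ) : n → ℝ :=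
  fun i => Real.sqrt ((Matrix.isHermitian_mul_conjTranspose_self X).eigenvalues i)

/-- Trace norm (Schatten 1-norm): sum of singular values; for Hermitian `X` this
is the sum of the absolute values of the eigenvalues. -/
noncomputable def traceNorm {n : Type*} [Fintype n] [DecidableEq n]
    (X : Matrix n n ℂ) : ℝ :=
  ∑ i, singVals X i

/-- Operator norm (Schatten ∞-norm): largest singular value. -/
noncomputable def opNorm {n : Type*} [Fintype n] [DecidableEq n]
    (X : Matrix n n ℂ) : ℝ :=
  ⨆ i, singVals X i

/-- A density operator: positive semidefinite with unit trace. -/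
def Density {n : Type*} [Fintype n] (ρ : Matrix n n ℂ) : Prop :=
  ρ.PosSemidef ∧ ρ.trace = 1

/-- Loewner order: `X ⊑ Y` iff `Y - X` is positive semidefinite. -/
def Loewner {n : Type*} [Fintype n] (X Y : Matrix n n ℂ) : Prop :=
  (Y - X).PosSemidef

/-- Partial trace over the second (B) factor. -/
noncomputable def ptraceB {a b : Type*} [Fintype b] (M : Matrix (a × b) (a × b) ℂ) :
    Matrix a a ℂ :=
  Matrix.of fun i j => ∑ k, M (i, k) (j, k)

/-- Choi matrix of a linear map on matrices. -/
noncomputable def choi {da db : ℕ}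
    (Φ : Matrix (Fin da) (Fin da) ℂ →ₗ[ℂ] Matrix (Fin db) (Fin db) ℂ) :
    Matrix (Fin da × Fin db) (Fin da × Fin db) ℂ :=
  Matrix.of fun p q => Φ (Matrix.single p.1 q.1 1) p.2 q.2

/-- Completely positive and trace non-increasing, via the Choi matrix. -/
def IsCPTNI {da db : ℕ}
    (Φ : Matrix (Fin da) (Fin da) ℂ →ₗ[ℂ] Matrix (Fin db) (Fin db) ℂ) : Prop :=
  (choi Φ).PosSemidef ∧ Loewner (ptraceB (choi Φ)) 1

/-- Completely positive and trace preserving, via the Choi matrix. -/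
def IsCPTP {da db : ℕ}
    (Φ : Matrix (Fin da) (Fin da) ℂ →ₗ[ℂ] Matrix (Fin db) (Fin db) ℂ) : Prop :=
  (choi Φ).PosSemidef ∧ ptraceB (choi Φ) = 1

/-- The map `id_A ⊗ Φ` acting on operators on `A ⊗ A`. -/
noncomputable def idTensor {da db : ℕ}
    (Φ : Matrix (Fin da) (Fin da) ℂ →ₗ[ℂ] Matrix (Fin db) (Fin db) ℂ)
    (M : Matrix (Fin da × Fin da) (Fin da × Fin da) ℂ) :
    Matrix (Fin da × Fin db) (Fin da × Fin db) ℂ :=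
  Matrix.of fun p q => Φ (Matrix.of fun k l => M (p.1, k) (q.1, l)) p.2 q.2

/-- Diamond norm: `max_ρ ‖(id ⊗ Φ)(ρ)‖₁` over bipartite density operators. -/
noncomputable def diamondNorm {da db : ℕ}
    (Φ : Matrix (Fin da) (Fin da) ℂ →ₗ[ℂ] Matrix (Fin db) (Fin db) ℂ) : ℝ :=
  sSup {x : ℝ | ∃ ρ : Matrix (Fin da × Fin da) (Fin da × Fin da) ℂ,
    Density ρ ∧ x = traceNorm (idTensor Φ ρ)}

/-- Base norm with respect to CPTNI maps. -/
noncomputable def cptniNorm {da db : ℕ}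
    (Φ : Matrix (Fin da) (Fin da) ℂ →ₗ[ℂ] Matrix (Fin db) (Fin db) ℂ) : ℝ :=
  sInf {s : ℝ | ∃ lp lm : ℝ, ∃ Λp Λm :
      Matrix (Fin da) (Fin da) ℂ →ₗ[ℂ] Matrix (Fin db) (Fin db) ℂ,
    0 ≤ lp ∧ 0 ≤ lm ∧ IsCPTNI Λp ∧ IsCPTNI Λm ∧
    Φ = (lp : ℂ) • Λp - (lm : ℂ) • Λm ∧ s = lp + lm}

/-! The Jordan decomposition `J = J⁺ - J⁻` of the Choi matrix, with each part rescaled by its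
trace, is a CPTNI decomposition of cost `tr J⁺ + tr J⁻ = ‖J‖₁`: the partial trace of a rescaled
part is positive semidefinite of trace at most one, hence lies below `1`. Conversely, if
`J = λ₊ J₊ - λ₋ J₋` with `J±` positive semidefinite, then in an eigenbasis of `J` every eigenvalue
is a difference of two nonnegative diagonal entries, whence `‖J‖₁ ≤ λ₊ tr J₊ + λ₋ tr J₋`; and
`tr J± = tr (Tr_B J±) ≤ tr 1 = d_A` for CPTNI maps. -/

open scoped MatrixOrder

namespace Matrix

section Spectral
variable {𝕜 n : Type*} [RCLike 𝕜] [Fintype n] [DecidableEq n]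

lemma IsHermitian.trace_cfc {A : Matrix n n 𝕜} (hA : A.IsHermitian) (f : ℝ → ℝ) :
    (cfc f A).trace = ∑ i, (f (hA.eigenvalues i) : 𝕜) := by
  rw [hA.cfc_eq, IsHermitian.cfc, Unitary.conjStarAlgAut_apply, trace_mul_cycle,
    Unitary.coe_star_mul_self, one_mul, trace_diagonal]
  rfl

lemma PosSemidef.le_one_of_re_trace_le_one {M : Matrix n n 𝕜} (hM : M.PosSemidef)
    (h : RCLike.re M.trace ≤ 1) : M ≤ 1 := by
  rw [← map_one (algebraMap ℝ (Matrix n n 𝕜)), le_algebraMap_iff_spectrum_le hM.1.isSelfAdjoint,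
    hM.1.spectrum_real_eq_range_eigenvalues]
  rintro _ ⟨i, rfl⟩
  refine le_trans ?_ h
  rw [hM.1.trace_eq_sum_eigenvalues, map_sum]
  simp only [RCLike.ofReal_re]
  exact Finset.single_le_sum (fun j _ => hM.eigenvalues_nonneg j) (Finset.mem_univ i)

end Spectral

section ComplexTrace
variable {n : Type*} [Fintype n] {M : Matrix n n ℂ}

lemma PosSemidef.re_trace_nonneg (hM : M.PosSemidef) : 0 ≤ M.trace.re :=
  (Complex.nonneg_iff.mp hM.trace_nonneg).1

lemma PosSemidef.trace_eq_ofReal_re (hM : M.PosSemidef) : M.trace = (M.trace.re : ℂ) :=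
  Complex.ext rfl (Complex.nonneg_iff.mp hM.trace_nonneg).2.symm

end ComplexTrace

section TraceNorm
variable {n : Type*} [Fintype n] [DecidableEq n]

lemma IsHermitian.traceNorm_eq_re_trace_abs {A : Matrix n n ℂ} (hA : A.IsHermitian) :
    traceNorm A = (CFC.abs A).trace.re := by
  have hP : (A * Aᴴ).PosSemidef := posSemidef_self_mul_conjTranspose A
  rw [CFC.abs, show star A * A = A * Aᴴ by rw [star_eq_conjTranspose, hA.eq],
    CFC.sqrt_eq_real_sqrt _ hP.nonneg, cfcₙ_eq_cfc,
    (isHermitian_mul_conjTranspose_self A).trace_cfc, traceNorm]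
  simp [singVals]

lemma IsHermitian.traceNorm_eq_sum_abs_eigenvalues {A : Matrix n n ℂ} (hA : A.IsHermitian) :
    traceNorm A = ∑ i, |hA.eigenvalues i| := by
  rw [hA.traceNorm_eq_re_trace_abs, CFC.abs_eq_cfcₙ_norm A hA.isSelfAdjoint, cfcₙ_eq_cfc,
    hA.trace_cfc]
  simp

lemma IsHermitian.traceNorm_eq_re_trace_posPart_add_negPart {A : Matrix n n ℂ}
    (hA : A.IsHermitian) : traceNorm A = (A⁺).trace.re + (A⁻).trace.re := by
  rw [hA.traceNorm_eq_re_trace_abs, ← CFC.posPart_add_negPart A hA.isSelfAdjoint, trace_add,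
    Complex.add_re]

lemma traceNorm_sub_le {A B : Matrix n n ℂ} (hA : A.PosSemidef) (hB : B.PosSemidef) :
    traceNorm (A - B) ≤ A.trace.re + B.trace.re := by
  have hX : (A - B).IsHermitian := hA.1.sub hB.1
  set U : Matrix n n ℂ := (hX.eigenvectorUnitary : Matrix n n ℂ)
  have hU : U * Uᴴ = 1 := Unitary.coe_mul_star_self _
  have hdiag : Uᴴ * (A - B) * U = diagonal (RCLike.ofReal ∘ hX.eigenvalues) :=
    (Unitary.conjStarAlgAut_star_apply _ _).symm.trans hX.conjStarAlgAut_star_eigenvectorUnitary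
  have htrace (M : Matrix n n ℂ) : (Uᴴ * M * U).trace = M.trace := by
    rw [trace_mul_comm, ← mul_assoc, hU, one_mul]
  rw [hX.traceNorm_eq_sum_abs_eigenvalues, ← htrace A, ← htrace B, trace, trace, Complex.re_sum,
    Complex.re_sum, ← Finset.sum_add_distrib]
  refine Finset.sum_le_sum fun i _ => ?_
  have hAi := (Complex.nonneg_iff.mp ((hA.conjTranspose_mul_mul_same U).diag_nonneg (i := i))).1
  have hBi := (Complex.nonneg_iff.mp ((hB.conjTranspose_mul_mul_same U).diag_nonneg (i := i))).1
  have heig : hX.eigenvalues i = ((Uᴴ * A * U) i i).re - ((Uᴴ * B * U) i i).re := by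
    simpa [mul_sub, sub_mul] using congrArg Complex.re (congr_fun (congr_fun hdiag i) i).symm
  rw [heig, diag_apply, diag_apply]
  exact abs_le.mpr ⟨by linarith, by linarith⟩

end TraceNorm

end Matrix

section PartialTrace
variable {a b : Type*} [Fintype b]

lemma trace_ptraceB [Fintype a] (M : Matrix (a × b) (a × b) ℂ) :
    (ptraceB M).trace = M.trace := by
  simp only [Matrix.trace, ptraceB, Matrix.diag_apply, Matrix.of_apply, Fintype.sum_prod_type]

lemma posSemidef_ptraceB [Fintype a] {M : Matrix (a × b) (a × b) ℂ} (hM : M.PosSemidef) :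
    (ptraceB M).PosSemidef := by
  have : ptraceB M = ∑ k, M.submatrix (fun i => (i, k)) (fun j => (j, k)) := by
    ext i j
    simp [ptraceB, Matrix.sum_apply]
  rw [this]
  exact Matrix.posSemidef_sum _ fun k _ => hM.submatrix _

end PartialTrace

section Choi
variable {da db : ℕ}

lemma choi_sub (Φ Ψ : Matrix (Fin da) (Fin da) ℂ →ₗ[ℂ] Matrix (Fin db) (Fin db) ℂ) :
    choi (Φ - Ψ) = choi Φ - choi Ψ := by
  ext p q
  simp [choi]

lemma choi_smul (c : ℂ) (Φ : Matrix (Fin da) (Fin da) ℂ →ₗ[ℂ] Matrix (Fin db) (Fin db) ℂ) :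
    choi (c • Φ) = c • choi Φ := by
  ext p q
  simp [choi]

lemma choi_injective : Function.Injective
    (choi : (Matrix (Fin da) (Fin da) ℂ →ₗ[ℂ] Matrix (Fin db) (Fin db) ℂ) → _) := by
  intro Φ Ψ h
  refine Matrix.ext_linearMap ℂ fun k l => LinearMap.ext_ring ?_
  ext i j
  exact congr_fun (congr_fun h (k, i)) (l, j)

lemma choi_surjective : Function.Surjective
    (choi : (Matrix (Fin da) (Fin da) ℂ →ₗ[ℂ] Matrix (Fin db) (Fin db) ℂ) → _) := by
  intro J
  refine ⟨Matrix.liftLinear ℂ fun k l =>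
    LinearMap.toSpanSingleton ℂ _ (Matrix.of fun i j => J (k, i) (l, j)), ?_⟩
  ext p q
  simp [choi]

lemma IsCPTNI.re_trace_choi_le {Λ : Matrix (Fin da) (Fin da) ℂ →ₗ[ℂ] Matrix (Fin db) (Fin db) ℂ}
    (hΛ : IsCPTNI Λ) : (choi Λ).trace.re ≤ da := by
  have h := hΛ.2.re_trace_nonneg
  rw [Matrix.trace_sub, Matrix.trace_one, trace_ptraceB, Fintype.card_fin] at h
  simpa [sub_nonneg] using h

lemma exists_isCPTNI_smul_choi_eq {J : Matrix (Fin da × Fin db) (Fin da × Fin db) ℂ}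
    (hJ : J.PosSemidef) : ∃ Λ, IsCPTNI Λ ∧ (J.trace.re : ℂ) • choi Λ = J := by
  set t := J.trace.re
  have ht0 : 0 ≤ t := hJ.re_trace_nonneg
  obtain ⟨Λ, hΛ⟩ := choi_surjective ((t : ℂ)⁻¹ • J)
  have hΛpsd : (choi Λ).PosSemidef := hΛ ▸ hJ.smul (by exact_mod_cast inv_nonneg.mpr ht0)
  refine ⟨Λ, ⟨hΛpsd, ?_⟩, ?_⟩
  · rw [Loewner, ← Matrix.le_iff]
    refine (posSemidef_ptraceB hΛpsd).le_one_of_re_trace_le_one ?_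
    rw [trace_ptraceB, hΛ, Matrix.trace_smul, hJ.trace_eq_ofReal_re, smul_eq_mul,
      ← Complex.ofReal_inv, ← Complex.ofReal_mul, RCLike.re_to_complex, Complex.ofReal_re]
    exact inv_mul_le_one_of_le₀ le_rfl ht0
  · rcases eq_or_ne t 0 with h | h
    -- `t⁻¹ = 0` is a junk value at `t = 0`, but then `J = 0` anyway
    · have hJ0 : J = 0 :=
        hJ.trace_eq_zero_iff.mp (by rw [hJ.trace_eq_ofReal_re]; exact_mod_cast h)
      rw [h, Complex.ofReal_zero, zero_smul, hJ0]
    · rw [hΛ, smul_smul, mul_inv_cancel₀ (by exact_mod_cast h), one_smul]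

end Choi

section CPTNINorm
variable {da db : ℕ}

lemma exists_cptni_decomposition_traceNorm_choi
    {Φ : Matrix (Fin da) (Fin da) ℂ →ₗ[ℂ] Matrix (Fin db) (Fin db) ℂ} (hH : (choi Φ).IsHermitian) :
    ∃ lp lm : ℝ, ∃ Λp Λm : Matrix (Fin da) (Fin da) ℂ →ₗ[ℂ] Matrix (Fin db) (Fin db) ℂ,
      0 ≤ lp ∧ 0 ≤ lm ∧ IsCPTNI Λp ∧ IsCPTNI Λm ∧
      Φ = (lp : ℂ) • Λp - (lm : ℂ) • Λm ∧ traceNorm (choi Φ) = lp + lm := by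
  have hpos : ((choi Φ)⁺).PosSemidef := (CFC.posPart_nonneg _).posSemidef
  have hneg : ((choi Φ)⁻).PosSemidef := (CFC.negPart_nonneg _).posSemidef
  obtain ⟨Λp, hp, hchoi_p⟩ := exists_isCPTNI_smul_choi_eq hpos
  obtain ⟨Λm, hm, hchoi_m⟩ := exists_isCPTNI_smul_choi_eq hneg
  refine ⟨_, _, Λp, Λm, hpos.re_trace_nonneg, hneg.re_trace_nonneg, hp, hm, choi_injective ?_,
    hH.traceNorm_eq_re_trace_posPart_add_negPart⟩
  rw [choi_sub, choi_smul, choi_smul, hchoi_p, hchoi_m, CFC.posPart_sub_negPart _ hH.isSelfAdjoint]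

lemma traceNorm_choi_smul_sub_smul_le {lp lm : ℝ} (hlp : 0 ≤ lp) (hlm : 0 ≤ lm)
    {Λp Λm : Matrix (Fin da) (Fin da) ℂ →ₗ[ℂ] Matrix (Fin db) (Fin db) ℂ}
    (hp : IsCPTNI Λp) (hm : IsCPTNI Λm) :
    traceNorm (choi ((lp : ℂ) • Λp - (lm : ℂ) • Λm)) ≤ (lp + lm) * da := by
  rw [choi_sub, choi_smul, choi_smul]
  refine (traceNorm_sub_le (hp.1.smul (by exact_mod_cast hlp))
    (hm.1.smul (by exact_mod_cast hlm))).trans ?_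
  simp only [Matrix.trace_smul, smul_eq_mul, Complex.re_ofReal_mul, add_mul]
  exact add_le_add (mul_le_mul_of_nonneg_left hp.re_trace_choi_le hlp)
    (mul_le_mul_of_nonneg_left hm.re_trace_choi_le hlm)

end CPTNINorm

theorem cptniNorm_traceNorm_bounds_general {da db : ℕ}
    (Φ : Matrix (Fin da) (Fin da) ℂ →ₗ[ℂ] Matrix (Fin db) (Fin db) ℂ) (hH : (choi Φ).IsHermitian) :
    (1 / (da : ℝ)) * traceNorm (choi Φ) ≤ cptniNorm Φ ∧
    cptniNorm Φ ≤ traceNorm (choi Φ) := by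
  have hmem := exists_cptni_decomposition_traceNorm_choi hH
  unfold cptniNorm
  refine ⟨le_csInf ⟨_, hmem⟩ ?_, csInf_le ⟨0, ?_⟩ hmem⟩
  · rintro _ ⟨lp, lm, Λp, Λm, hlp, hlm, hp, hm, rfl, rfl⟩
    rw [one_div_mul_eq_div]
    exact div_le_of_le_mul₀ (Nat.cast_nonneg da) (add_nonneg hlp hlm)
      (traceNorm_choi_smul_sub_smul_le hlp hlm hp hm)
  · rintro _ ⟨lp, lm, -, -, hlp, hlm, -, -, -, rfl⟩
    exact add_nonneg hlp hlm

/-- `(1/d_A) ‖J_Φ‖₁ ≤ ‖Φ‖_CPTNI ≤ ‖J_Φ‖₁`. -/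
theorem cptniNorm_traceNorm_bounds {da db : ℕ} (hda : 0 < da)
    (Φ : Matrix (Fin da) (Fin da) ℂ →ₗ[ℂ] Matrix (Fin db) (Fin db) ℂ) (hH : (choi Φ).IsHermitian) :
    (1 / (da : ℝ)) * traceNorm (choi Φ) ≤ cptniNorm Φ ∧
    cptniNorm Φ ≤ traceNorm (choi Φ) :=
  cptniNorm_traceNorm_bounds_general Φ hH
end

section
/- For any Hermiticity-preserving map Φ, the base norm with respect to CPTNI maps is upper bounded as ‖Φ‖_CPTNI ≤ λ_max(Tr_B (J_Φ)₊) + λ_max(Tr_B (J_Φ)₋), where λ_max denotes the largest eigenvalue. -/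
open Matrix Kronecker ComplexOrder

/-! Let `λ± > λ_max(Tr_B (J_Φ)±)`. Since `Tr_B (J_Φ)± ≤ λ±·1` in the Loewner order, the maps
`Λ±` with Choi matrices `(J_Φ)± / λ±` are CPTNI, and `Φ = λ₊ Λ₊ - λ₋ Λ₋` because the Choi
correspondence is a linear isomorphism. Letting `λ±` decrease to `λ_max(Tr_B (J_Φ)±)` gives the
bound; the strict inequality keeps the normalisation defined when a partial trace vanishes.

For positive semidefinite `A` the largest eigenvalue is the operator norm `opNorm A`, because each
eigenvalue `λ` of `A` gives the eigenvalue `λ²` of `A * Aᴴ = A²`. -/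

section LoewnerBound

variable {n : Type*} [Fintype n] [DecidableEq n]

lemma Matrix.IsHermitian.loewner_smul_one {A : Matrix n n ℂ} (hA : A.IsHermitian) {c : ℝ}
    (hc : ∀ i, hA.eigenvalues i ≤ c) : Loewner A (c • 1) := by
  rw [Loewner, posSemidef_iff_isHermitian_and_spectrum_nonneg,
    RCLike.real_smul_eq_coe_smul (K := ℂ), ← Algebra.algebraMap_eq_smul_one,
    ← spectrum.singleton_sub_eq]
  refine ⟨IsSelfAdjoint.sub (.algebraMap _ (Complex.conj_ofReal c)) hA, ?_⟩
  rintro _ ⟨_, rfl, _, hμ, rfl⟩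
  rw [hA.spectrum_eq_image_range] at hμ
  obtain ⟨_, ⟨i, rfl⟩, rfl⟩ := hμ
  simpa [sub_nonneg] using hc i

lemma opNorm_nonneg (A : Matrix n n ℂ) : 0 ≤ opNorm A :=
  Real.iSup_nonneg fun _ => Real.sqrt_nonneg _

lemma Matrix.PosSemidef.eigenvalues_le_opNorm {A : Matrix n n ℂ} (hA : A.PosSemidef) (i : n) :
    hA.isHermitian.eigenvalues i ≤ opNorm A := by
  have hAA := isHermitian_mul_conjTranspose_self A
  have hsq : (hA.isHermitian.eigenvalues i : ℂ) ^ 2 ∈ spectrum ℂ (A * Aᴴ) := by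
    rw [hA.isHermitian.eq, ← sq]
    exact spectrum.pow_mem_pow _ _ (hA.isHermitian.spectrum_eq_image_range ▸ ⟨_, ⟨i, rfl⟩, rfl⟩)
  rw [hAA.spectrum_eq_image_range] at hsq
  obtain ⟨_, ⟨j, rfl⟩, hj⟩ := hsq
  have hj' : hAA.eigenvalues j = hA.isHermitian.eigenvalues i ^ 2 :=
    Complex.ofReal_injective (by simpa using hj)
  calc hA.isHermitian.eigenvalues i = singVals A j := by
        rw [singVals, hj', Real.sqrt_sq (hA.eigenvalues_nonneg i)]
    _ ≤ opNorm A := le_ciSup (Set.finite_range _).bddAbove j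

lemma Matrix.PosSemidef.loewner_smul_one {A : Matrix n n ℂ} (hA : A.PosSemidef) {c : ℝ}
    (hc : opNorm A ≤ c) : Loewner A (c • 1) :=
  hA.isHermitian.loewner_smul_one fun i => (hA.eigenvalues_le_opNorm i).trans hc

end LoewnerBound

section PartialTrace

variable {a b : Type*} [Fintype b]

lemma ptraceB_eq_sum_submatrix (M : Matrix (a × b) (a × b) ℂ) :
    ptraceB M = ∑ k, M.submatrix (·, k) (·, k) := by
  ext i j
  simp [ptraceB, Matrix.sum_apply]

lemma ptraceB_smul (c : ℝ) (M : Matrix (a × b) (a × b) ℂ) : ptraceB (c • M) = c • ptraceB M := by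
  ext i j
  simp [ptraceB, Finset.smul_sum]

lemma Matrix.PosSemidef.ptraceB {M : Matrix (a × b) (a × b) ℂ} (hM : M.PosSemidef) :
    (ptraceB M).PosSemidef := by
  rw [ptraceB_eq_sum_submatrix]
  exact posSemidef_sum _ fun k _ => hM.submatrix _

end PartialTrace

section Choi

variable {da db : ℕ}

noncomputable def choiEquiv :
    (Matrix (Fin da) (Fin da) ℂ →ₗ[ℂ] Matrix (Fin db) (Fin db) ℂ) ≃ₗ[ℂ]
      Matrix (Fin da × Fin db) (Fin da × Fin db) ℂ where
  toFun := choi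
  map_add' Φ Ψ := by ext; simp [choi]
  map_smul' c Φ := by ext; simp [choi]
  invFun J :=
    { toFun X := Matrix.of fun r s => ∑ k, ∑ l, X k l * J (k, r) (l, s)
      map_add' X Y := by ext; simp [add_mul, Finset.sum_add_distrib]
      map_smul' c X := by ext; simp [Finset.mul_sum, mul_assoc] }
  left_inv Φ := by
    ext X r s
    conv_rhs => rw [matrix_eq_sum_single X]
    have hX : ∀ k l, single k l (X k l) = X k l • single k l (1 : ℂ) := fun k l => by
      rw [smul_single, smul_eq_mul, mul_one]
    simp only [hX, map_sum, _root_.map_smul, Matrix.sum_apply]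
    simp [choi]
  right_inv J := by
    ext p q
    simp [choi, Matrix.single_apply, ite_and]

@[simp]
lemma choiEquiv_apply (Φ : Matrix (Fin da) (Fin da) ℂ →ₗ[ℂ] Matrix (Fin db) (Fin db) ℂ) :
    choiEquiv Φ = choi Φ :=
  rfl

lemma isCPTNI_choiEquiv_symm_inv_smul {Q : Matrix (Fin da × Fin db) (Fin da × Fin db) ℂ}
    (hQ : Q.PosSemidef) {l : ℝ} (hl : 0 < l) (hQl : Loewner (ptraceB Q) (l • 1)) :
    IsCPTNI (choiEquiv.symm (l⁻¹ • Q)) := by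
  have hchoi : choi (choiEquiv.symm (l⁻¹ • Q)) = l⁻¹ • Q := choiEquiv.apply_symm_apply _
  refine ⟨by rw [hchoi]; exact hQ.smul (inv_nonneg.mpr hl.le), ?_⟩
  have h : 1 - ptraceB (l⁻¹ • Q) = l⁻¹ • (l • 1 - ptraceB Q) := by
    rw [ptraceB_smul, smul_sub, smul_smul, inv_mul_cancel₀ hl.ne', one_smul]
  rw [Loewner, hchoi, h]
  exact hQl.smul (inv_nonneg.mpr hl.le)

end Choi

section CPTNINorm

variable {da db : ℕ}

lemma cptniNorm_le {Φ Λp Λm : Matrix (Fin da) (Fin da) ℂ →ₗ[ℂ] Matrix (Fin db) (Fin db) ℂ}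
    {lp lm : ℝ} (hlp : 0 ≤ lp) (hlm : 0 ≤ lm) (hΛp : IsCPTNI Λp) (hΛm : IsCPTNI Λm)
    (hΦ : Φ = (lp : ℂ) • Λp - (lm : ℂ) • Λm) : cptniNorm Φ ≤ lp + lm :=
  csInf_le ⟨0, by rintro _ ⟨a, b, -, -, ha, hb, -, -, -, rfl⟩; positivity⟩
    ⟨lp, lm, Λp, Λm, hlp, hlm, hΛp, hΛm, hΦ, rfl⟩

lemma cptniNorm_le_of_choi_eq_sub
    {Φ : Matrix (Fin da) (Fin da) ℂ →ₗ[ℂ] Matrix (Fin db) (Fin db) ℂ}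
    {P N : Matrix (Fin da × Fin db) (Fin da × Fin db) ℂ} (hP : P.PosSemidef) (hN : N.PosSemidef)
    (hdec : choi Φ = P - N) {lp lm : ℝ} (hlp : 0 < lp) (hlm : 0 < lm)
    (hPl : Loewner (ptraceB P) (lp • 1)) (hNl : Loewner (ptraceB N) (lm • 1)) :
    cptniNorm Φ ≤ lp + lm := by
  refine cptniNorm_le hlp.le hlm.le (isCPTNI_choiEquiv_symm_inv_smul hP hlp hPl)
    (isCPTNI_choiEquiv_symm_inv_smul hN hlm hNl) (choiEquiv.injective ?_)
  simp only [map_sub, map_smul, LinearEquiv.apply_symm_apply, choiEquiv_apply, hdec,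
    Complex.coe_smul, smul_smul, mul_inv_cancel₀ hlp.ne', mul_inv_cancel₀ hlm.ne', one_smul]

end CPTNINorm

theorem cptniNorm_le_lambdaMax_sum_general {da db : ℕ}
    (Φ : Matrix (Fin da) (Fin da) ℂ →ₗ[ℂ] Matrix (Fin db) (Fin db) ℂ)
    (P N : Matrix (Fin da × Fin db) (Fin da × Fin db) ℂ)
    (hP : P.PosSemidef) (hN : N.PosSemidef)
    (hdec : choi Φ = P - N) :
    cptniNorm Φ ≤ opNorm (ptraceB P) + opNorm (ptraceB N) := by
  refine le_of_forall_pos_le_add fun ε hε => ?_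
  have hP0 := opNorm_nonneg (ptraceB P)
  have hN0 := opNorm_nonneg (ptraceB N)
  have hbound := cptniNorm_le_of_choi_eq_sub hP hN hdec (by positivity) (by positivity)
    (hP.ptraceB.loewner_smul_one (le_add_of_nonneg_right (half_pos hε).le))
    (hN.ptraceB.loewner_smul_one (le_add_of_nonneg_right (half_pos hε).le))
  linarith

/-- `‖Φ‖_CPTNI ≤ λ_max(Tr_B (J_Φ)₊) + λ_max(Tr_B (J_Φ)₋)` for the
Jordan decomposition `J_Φ = P - N` (for psd operators `λ_max` is the operator
norm). -/
theorem cptniNorm_le_lambdaMax_sum {da db : ℕ}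
    (Φ : Matrix (Fin da) (Fin da) ℂ →ₗ[ℂ] Matrix (Fin db) (Fin db) ℂ) (hH : (choi Φ).IsHermitian)
    (P N : Matrix (Fin da × Fin db) (Fin da × Fin db) ℂ)
    (hP : P.PosSemidef) (hN : N.PosSemidef)
    (hdec : choi Φ = P - N) (horth : P * N = 0) :
    cptniNorm Φ ≤ opNorm (ptraceB P) + opNorm (ptraceB N) :=
  cptniNorm_le_lambdaMax_sum_general Φ P N hP hN hdec
end
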